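/- arXiv:1610.09780 — 6 statements merged into one kernel-verified Lean document; each statement's English description precedes it below -/
import Mathlib

section
/- If Y ~ NegativeBinomial(r, p) and independently Z ~ NegativeBinomial(r', p), then the conditional distribution of Y given Y + Z = n is BetaBinomial(n, r, r'). -/
open Real Finset

/-- pmf of the (untruncated) negative binomial distribution NegBin(r,p). -/
noncomputable def negBinPmf (r p : ℝ) (y : ℕ) : ℝ :=
  Real.Gamma (y + r) / (Nat.factorial y * Real.Gamma r) * (1 - p) ^ r * p ^ y

/-- pmf of the beta-binomial distribution BetaBin(n,a,b), with
    B(a,b) = Γ(a)Γ(b)/Γ(a+b). -/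
noncomputable def betaBinPmf (n : ℕ) (a b : ℝ) (x : ℕ) : ℝ :=
  (n.choose x) *
    (Real.Gamma (x + a) * Real.Gamma ((n : ℝ) - x + b) / Real.Gamma ((n : ℝ) + a + b)) /
    (Real.Gamma a * Real.Gamma b / Real.Gamma (a + b))

/-!
Both pmfs are products of generalized binomial coefficients: `Γ(y + r) / (y! Γ(r))` is the
multichoose coefficient `(r)_y / y!`, so the joint weight of `(Y, Z) = (x, n - x)` is
`(1-p)^(r+r') pⁿ · multichoose r x · multichoose r' (n - x)`, and the Chu–Vandermonde identity
`∑ₓ multichoose r x · multichoose r' (n - x) = multichoose (r + r') n` evaluates the normalizing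
sum. The resulting ratio is the beta-binomial pmf written with Pochhammer symbols.
-/

theorem Ring.multichoose_add {R : Type*} [CommRing R] [BinomialRing R] (r s : R) (n : ℕ) :
    Ring.multichoose (r + s) n =
      ∑ ij ∈ antidiagonal n, Ring.multichoose r ij.1 * Ring.multichoose s ij.2 := by
  -- Vandermonde for `Ring.choose` at `-r, -s`, as `choose (-r) k = (-1)ᵏ • multichoose r k`.
  have h := Ring.add_choose_eq (r := -r) (s := -s) n (Commute.all _ _)
  rw [← neg_add, Ring.choose_neg'] at h
  have hsign : ∀ ij ∈ antidiagonal n, Ring.choose (-r) ij.1 * Ring.choose (-s) ij.2 =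
      Int.negOnePow n • (Ring.multichoose r ij.1 * Ring.multichoose s ij.2) := by
    intro ij hij
    rw [Ring.choose_neg', Ring.choose_neg', smul_mul_smul_comm, ← Int.negOnePow_add,
      ← Nat.cast_add, mem_antidiagonal.mp hij]
  rw [sum_congr rfl hsign, ← smul_sum] at h
  exact MulAction.injective (Int.negOnePow n) h

theorem Real.Gamma_nat_add_eq_mul_ascPochhammer {r : ℝ} (hr : ∀ m : ℕ, r ≠ -m) (n : ℕ) :
    Real.Gamma (n + r) = (ascPochhammer ℝ n).eval r * Real.Gamma r := by
  induction n with
  | zero => simp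
  | succ n ih =>
    have hne : (n : ℝ) + r ≠ 0 := fun h => hr n (by linarith)
    rw [Nat.cast_succ, add_right_comm, Real.Gamma_add_one hne, ih, ascPochhammer_succ_eval]
    ring

theorem Real.Gamma_nat_add_eq_factorial_mul_multichoose {r : ℝ} (hr : ∀ m : ℕ, r ≠ -m)
    (n : ℕ) : Real.Gamma (n + r) = n.factorial * Ring.multichoose r n * Real.Gamma r := by
  rw [Real.Gamma_nat_add_eq_mul_ascPochhammer hr, ← Polynomial.ascPochhammer_smeval_eq_eval,
    ← Ring.factorial_nsmul_multichoose_eq_ascPochhammer, nsmul_eq_mul]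

lemma negBinPmf_eq_multichoose {r : ℝ} (hr : ∀ m : ℕ, r ≠ -m) (p : ℝ) (y : ℕ) :
    negBinPmf r p y = Ring.multichoose r y * (1 - p) ^ r * p ^ y := by
  have hΓ : Real.Gamma r ≠ 0 := Real.Gamma_ne_zero hr
  have hfact : (y.factorial : ℝ) ≠ 0 := by positivity
  rw [negBinPmf, Real.Gamma_nat_add_eq_factorial_mul_multichoose hr]
  field_simp

lemma negBinPmf_mul_negBinPmf_sub {r r' : ℝ} (hr : ∀ m : ℕ, r ≠ -m) (hr' : ∀ m : ℕ, r' ≠ -m)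
    (p : ℝ) {n x : ℕ} (hx : x ≤ n) :
    negBinPmf r p x * negBinPmf r' p (n - x) =
      (1 - p) ^ r * (1 - p) ^ r' * p ^ n *
        (Ring.multichoose r x * Ring.multichoose r' (n - x)) := by
  rw [negBinPmf_eq_multichoose hr, negBinPmf_eq_multichoose hr', ← pow_mul_pow_sub p hx]
  ring

lemma sum_negBinPmf_mul_negBinPmf_sub {r r' : ℝ} (hr : ∀ m : ℕ, r ≠ -m)
    (hr' : ∀ m : ℕ, r' ≠ -m) (p : ℝ) (n : ℕ) :
    ∑ y ∈ range (n + 1), negBinPmf r p y * negBinPmf r' p (n - y) =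
      (1 - p) ^ r * (1 - p) ^ r' * p ^ n * Ring.multichoose (r + r') n := by
  rw [Ring.multichoose_add, Nat.sum_antidiagonal_eq_sum_range_succ
    (fun i j => Ring.multichoose r i * Ring.multichoose r' j), mul_sum]
  exact sum_congr rfl fun y hy =>
    negBinPmf_mul_negBinPmf_sub hr hr' p (Nat.lt_succ_iff.mp (mem_range.mp hy))

lemma betaBinPmf_eq_multichoose {a b : ℝ} (ha : ∀ m : ℕ, a ≠ -m) (hb : ∀ m : ℕ, b ≠ -m)
    (hab : ∀ m : ℕ, a + b ≠ -m) {n x : ℕ} (hx : x ≤ n) :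
    betaBinPmf n a b x =
      Ring.multichoose a x * Ring.multichoose b (n - x) / Ring.multichoose (a + b) n := by
  have hΓa := Real.Gamma_ne_zero ha
  have hΓb := Real.Gamma_ne_zero hb
  have hΓab := Real.Gamma_ne_zero hab
  have hΓn : Real.Gamma (n + (a + b)) ≠ 0 :=
    Real.Gamma_ne_zero fun m h => hab (n + m) (by push_cast; linarith)
  rw [Real.Gamma_nat_add_eq_factorial_mul_multichoose hab] at hΓn
  have hmc : Ring.multichoose (a + b) n ≠ 0 := right_ne_zero_of_mul (left_ne_zero_of_mul hΓn)
  have hchoose_ne : (n.choose x : ℝ) ≠ 0 := by exact_mod_cast (Nat.choose_pos hx).ne'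
  have hchoose : (n.choose x : ℝ) * x.factorial * (n - x).factorial = n.factorial := by
    exact_mod_cast Nat.choose_mul_factorial_mul_factorial hx
  rw [betaBinPmf, show (n : ℝ) - x + b = ((n - x : ℕ) : ℝ) + b by push_cast [hx]; ring,
    add_assoc, Real.Gamma_nat_add_eq_factorial_mul_multichoose ha,
    Real.Gamma_nat_add_eq_factorial_mul_multichoose hb,
    Real.Gamma_nat_add_eq_factorial_mul_multichoose hab, ← hchoose]
  field_simp

/-- If `Y ~ NegBin(r,p)` and independently `Z ~ NegBin(r',p)`, then the conditional
distribution of `Y` given `Y + Z = n` is `BetaBin(n, r, r')`. -/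
theorem negbin_cond_sum_betaBinomial (r r' p : ℝ) (hr : 0 < r) (hr' : 0 < r')
    (hp0 : 0 < p) (hp1 : p < 1) (n x : ℕ) (hx : x ≤ n) :
    negBinPmf r p x * negBinPmf r' p (n - x) /
      (∑ y ∈ Finset.range (n + 1), negBinPmf r p y * negBinPmf r' p (n - y)) =
    betaBinPmf n r r' x := by
  have ne_neg_nat {s : ℝ} (hs : 0 < s) (m : ℕ) : s ≠ -m := by
    have : (0 : ℝ) ≤ m := m.cast_nonneg
    linarith
  have hc : (1 - p) ^ r * (1 - p) ^ r' * p ^ n ≠ 0 := by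
    have : 0 < 1 - p := by linarith
    positivity
  rw [negBinPmf_mul_negBinPmf_sub (ne_neg_nat hr) (ne_neg_nat hr') p hx,
    sum_negBinPmf_mul_negBinPmf_sub (ne_neg_nat hr) (ne_neg_nat hr') p n,
    mul_div_mul_left _ _ hc, betaBinPmf_eq_multichoose (ne_neg_nat hr) (ne_neg_nat hr')
      (ne_neg_nat (add_pos hr hr')) hx]
end

section
/- Fix r > 0 and b > (r+1)/r. If θ_k ~ Beta(r, (k-1)r), then k · P(θ_k ≥ (b log k)/k) → 0 as k → ∞. -/
open Real Filter

/-!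
With `s = (k - 1) r` and `a = b log k / k`, the factor `θ ^ (r - 1)` is at most `1 / a` on
`[a, 1]`, so the tail is at most `(1 - a) ^ s / (a s B(r, s)) ≤ e ^ (-a s) / (a s B(r, s))`.
Here `e ^ (-a s) ≤ e ^ r k ^ (-r b)`, `a s ≥ b r / 2`, and log-convexity of `Γ` gives
`1 / B(r, s) ≤ (k r) ^ r / Γ(r)`. Hence `k · P(θ_k ≥ a) = O(k ^ (r + 1 - r b))`, which tends
to `0` because `r b > r + 1`.
-/

namespace Real

theorem Gamma_add_le_Gamma_mul_rpow {x s : ℝ} (hx : 0 < x) (hs : 0 ≤ s) :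
    Gamma (x + s) ≤ Gamma x * (x + s) ^ s := by
  rcases hs.eq_or_lt with rfl | hs
  · simp
  have hxs : 0 < x + s := by positivity
  -- log-convexity: the slope of `log ∘ Gamma` on `[x, x + s]` is at most its slope on
  -- `[x + s, x + s + 1]`, which is `log (x + s)`
  have slope := convexOn_log_Gamma.slope_mono_adjacent (x := x) (y := x + s) (z := x + s + 1)
    hx (by simp only [Set.mem_Ioi]; linarith) (by linarith) (by linarith)
  simp only [Function.comp_apply, Gamma_add_one hxs.ne',
    log_mul hxs.ne' (Gamma_pos_of_pos hxs).ne', add_sub_cancel_left, div_one,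
    div_le_iff₀ hs] at slope
  rw [← log_le_log_iff (Gamma_pos_of_pos hxs) (by have := Gamma_pos_of_pos hx; positivity),
    log_mul (Gamma_pos_of_pos hx).ne' (rpow_pos_of_pos hxs s).ne', log_rpow hxs]
  linarith

theorem one_sub_rpow_le_exp_neg_mul {a s : ℝ} (ha : a ≤ 1) (hs : 0 ≤ s) :
    (1 - a) ^ s ≤ exp (-(a * s)) := by
  calc (1 - a) ^ s ≤ exp (-a) ^ s := rpow_le_rpow (by linarith) (one_sub_le_exp_neg a) hs
    _ = exp (-(a * s)) := by rw [← exp_mul, neg_mul]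

end Real

theorem integral_rpow_mul_one_sub_rpow_le {a α β : ℝ} (ha : 0 < a) (ha1 : a ≤ 1) (hα : 0 < α)
    (hβ : 1 ≤ β) :
    ∫ θ in a..1, θ ^ (α - 1) * (1 - θ) ^ (β - 1) ≤ (1 - a) ^ β / (a * β) := by
  have hcont : Continuous fun θ : ℝ => (1 - θ) ^ (β - 1) :=
    (continuous_const.sub continuous_id).rpow_const fun _ => Or.inr (by linarith)
  have hθpow : ∀ θ ∈ Set.Icc a 1, θ ^ (α - 1) ≤ a⁻¹ := fun θ hθ => by
    have hθ0 : 0 < θ := ha.trans_le hθ.1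
    calc θ ^ (α - 1) = θ ^ α / θ := by rw [rpow_sub hθ0, rpow_one]
      _ ≤ 1 / a := div_le_div₀ zero_le_one (rpow_le_one hθ0.le hθ.2 hα.le) ha hθ.1
      _ = a⁻¹ := one_div a
  calc ∫ θ in a..1, θ ^ (α - 1) * (1 - θ) ^ (β - 1)
      ≤ ∫ θ in a..1, a⁻¹ * (1 - θ) ^ (β - 1) := by
        refine intervalIntegral.integral_mono_on ha1 ?_
          ((hcont.const_mul _).intervalIntegrable _ _) fun θ hθ =>
            mul_le_mul_of_nonneg_right (hθpow θ hθ) (rpow_nonneg (by linarith [hθ.2]) _)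
        refine (ContinuousOn.mul (fun θ hθ => ?_) hcont.continuousOn).intervalIntegrable
        rw [Set.uIcc_of_le ha1] at hθ
        exact (continuousAt_rpow_const θ _ (Or.inl (ha.trans_le hθ.1).ne')).continuousWithinAt
    _ = (1 - a) ^ β / (a * β) := by
        rw [intervalIntegral.integral_const_mul,
          intervalIntegral.integral_comp_sub_left (fun u : ℝ => u ^ (β - 1)) 1,
          integral_rpow (Or.inl (by linarith)), sub_add_cancel, sub_self,
          zero_rpow (by linarith)]
        field_simp
        ring

namespace ProbabilityTheory

theorem inv_beta_le {α β : ℝ} (hα : 0 < α) (hβ : 0 < β) :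
    (beta α β)⁻¹ ≤ (α + β) ^ α / Gamma α := by
  have hΓα := Gamma_pos_of_pos hα
  have hΓβ := Gamma_pos_of_pos hβ
  rw [beta, inv_div, div_le_div_iff₀ (by positivity) hΓα, add_comm α β]
  calc Gamma (β + α) * Gamma α ≤ Gamma β * (β + α) ^ α * Gamma α :=
        mul_le_mul_of_nonneg_right (Gamma_add_le_Gamma_mul_rpow hβ hα.le) hΓα.le
    _ = (β + α) ^ α * (Gamma α * Gamma β) := by ring

/-- `P(θ ≥ a)` for `θ ∼ Beta(α, β)`; only meaningful for `a ≤ 1`, the interval integral being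
oriented. -/
noncomputable def betaTail (α β a : ℝ) : ℝ :=
  ∫ θ in a..1, θ ^ (α - 1) * (1 - θ) ^ (β - 1) / beta α β

theorem betaTail_nonneg {α β a : ℝ} (hα : 0 < α) (hβ : 0 < β) (ha : 0 ≤ a) (ha1 : a ≤ 1) :
    0 ≤ betaTail α β a :=
  intervalIntegral.integral_nonneg ha1 fun θ hθ =>
    div_nonneg (mul_nonneg (rpow_nonneg (ha.trans hθ.1) _) (rpow_nonneg (by linarith [hθ.2]) _))
      (beta_pos hα hβ).le

theorem betaTail_le {α β a : ℝ} (hα : 0 < α) (hβ : 1 ≤ β) (ha : 0 < a) (ha1 : a ≤ 1) :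
    betaTail α β a ≤ (α + β) ^ α * exp (-(a * β)) / (Gamma α * (a * β)) := by
  have hβ0 : 0 < β := by linarith
  rw [betaTail, intervalIntegral.integral_div, div_eq_mul_inv]
  calc (∫ θ in a..1, θ ^ (α - 1) * (1 - θ) ^ (β - 1)) * (beta α β)⁻¹
      ≤ (exp (-(a * β)) / (a * β)) * ((α + β) ^ α / Gamma α) := by
        refine mul_le_mul ?_ (inv_beta_le hα hβ0) (inv_nonneg.2 (beta_pos hα hβ0).le)
          (by positivity)
        refine (integral_rpow_mul_one_sub_rpow_le ha ha1 hα hβ).trans ?_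
        gcongr
        exact one_sub_rpow_le_exp_neg_mul ha1 hβ0.le
    _ = (α + β) ^ α * exp (-(a * β)) / (Gamma α * (a * β)) := by ring

theorem mul_betaTail_log_div_le {r b x : ℝ} (hr : 0 < r) (hb : 0 < b) (hx : 3 ≤ x)
    (hβ : 1 ≤ (x - 1) * r) (ha1 : b * log x / x ≤ 1) :
    x * betaTail r ((x - 1) * r) (b * log x / x) ≤
      2 * exp r * r ^ r / (Gamma r * (b * r)) * x ^ (r + 1 - r * b) := by
  have hx0 : 0 < x := by linarith
  have hlog : 1 ≤ log x := by
    rw [le_log_iff_exp_le hx0]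
    linarith [exp_one_lt_d9]
  set a := b * log x / x with ha_def
  have ha0 : 0 < a := by positivity
  have haβ : b * r / 2 ≤ a * ((x - 1) * r) := by
    rw [ha_def, div_mul_eq_mul_div, le_div_iff₀ hx0]
    have hbr : 0 < b * r := mul_pos hb hr
    nlinarith [mul_le_mul_of_nonneg_left hlog (mul_nonneg hbr.le (by linarith : 0 ≤ x - 1))]
  have hexp : exp (-(a * ((x - 1) * r))) ≤ exp r * x ^ (-(r * b)) := by
    have ha_mul : a * x = b * log x := div_mul_cancel₀ _ hx0.ne'
    rw [rpow_def_of_pos hx0, ← exp_add]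
    gcongr
    nlinarith
  have hΓ := Gamma_pos_of_pos hr
  calc x * betaTail r ((x - 1) * r) a
      ≤ x * ((x * r) ^ r * exp (-(a * ((x - 1) * r))) / (Gamma r * (a * ((x - 1) * r)))) := by
        rw [show x * r = r + (x - 1) * r by ring]
        exact mul_le_mul_of_nonneg_left (betaTail_le hr hβ ha0 ha1) hx0.le
    _ ≤ x * ((x * r) ^ r * (exp r * x ^ (-(r * b))) / (Gamma r * (b * r / 2))) := by
        gcongr
    _ = 2 * exp r * r ^ r / (Gamma r * (b * r)) * x ^ (r + 1 - r * b) := by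
        rw [mul_rpow hx0.le hr.le, sub_eq_add_neg, rpow_add hx0, rpow_add hx0, rpow_one]
        field_simp

end ProbabilityTheory

open ProbabilityTheory

theorem tendsto_mul_log_div_atTop_zero (b : ℝ) :
    Tendsto (fun k : ℕ => b * log k / k) atTop (nhds 0) := by
  have h := (tendsto_pow_log_div_mul_add_atTop 1 0 1 one_ne_zero).comp tendsto_natCast_atTop_atTop
  simpa [mul_div_assoc] using h.const_mul b

/-- Fix `r > 0` and `b > (r+1)/r`. If `θ_k ~ Beta(r, (k-1)r)`, then
`k · P(θ_k ≥ (b log k)/k) → 0` as `k → ∞`.  Here the beta tail probability is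
written as an integral of the beta density, with `B(α,β) = Γ(α)Γ(β)/Γ(α+β)`. -/
theorem beta_tail_tendsto_zero (r b : ℝ) (hr : 0 < r) (hb : b > (r + 1) / r) :
    Tendsto (fun k : ℕ =>
        (k : ℝ) *
          ∫ θ in (b * Real.log k / k)..1,
            θ ^ (r - 1) * (1 - θ) ^ (((k : ℝ) - 1) * r - 1) /
              (Real.Gamma r * Real.Gamma (((k : ℝ) - 1) * r) / Real.Gamma ((k : ℝ) * r)))
      atTop (nhds 0) := by
  rw [gt_iff_lt, div_lt_iff₀ hr] at hb
  have hb0 : 0 < b := by nlinarith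
  have hbeta (k : ℕ) : Gamma r * Gamma (((k : ℝ) - 1) * r) / Gamma ((k : ℝ) * r) =
      beta r (((k : ℝ) - 1) * r) := by
    rw [beta, show r + ((k : ℝ) - 1) * r = k * r by ring]
  simp only [hbeta]
  change Tendsto (fun k : ℕ => (k : ℝ) * betaTail r ((k - 1) * r) (b * log k / k)) atTop (nhds 0)
  have hdecay : Tendsto (fun k : ℕ => (k : ℝ) ^ (r + 1 - r * b)) atTop (nhds 0) := by
    simpa only [neg_sub, Function.comp_def] using
      (tendsto_rpow_neg_atTop (y := r * b - (r + 1)) (by linarith)).comp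
        tendsto_natCast_atTop_atTop
  have hshape : ∀ᶠ k : ℕ in atTop, 1 ≤ ((k : ℝ) - 1) * r :=
    ((tendsto_atTop_add_const_right _ (-1) tendsto_natCast_atTop_atTop).atTop_mul_const
      hr).eventually_ge_atTop 1
  have hthreshold : ∀ᶠ k : ℕ in atTop, b * log k / k ≤ 1 :=
    (tendsto_mul_log_div_atTop_zero b).eventually (eventually_le_nhds one_pos)
  refine squeeze_zero' ?_ ?_
    (by simpa using hdecay.const_mul (2 * exp r * r ^ r / (Gamma r * (b * r))))
  · filter_upwards [hshape, hthreshold] with k hβ ha1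
    exact mul_nonneg k.cast_nonneg (betaTail_nonneg hr (by linarith) (by positivity) ha1)
  · filter_upwards [eventually_ge_atTop 3, hshape, hthreshold] with k hk hβ ha1
    exact mul_betaTail_log_div_le hr hb0 (by exact_mod_cast hk) hβ ha1
end

section
/- For any fixed a ∈ ℝ, Γ(x+a)/Γ(x) is asymptotically equivalent to x^a as x → ∞, i.e., (Γ(x+a)/Γ(x))/x^a → 1. -/
/-!
Log-convexity of `Γ` (Hölder's inequality for the Euler integral) combined with
`Γ (y + 1) = y Γ y` gives Wendel's bound `Γ (y + b) ≤ y ^ b Γ y` for `0 < b < 1`.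
Applied once at `y = x` and once at `y = x + a` with `b = 1 - a`, it traps
`Γ (x + a) / (Γ x * x ^ a)` between `((x + a) / x) ^ (a - 1)` and `1`, which settles
`0 < a < 1`. Since `Γ (x + a + 1) = (x + a) Γ (x + a)` and `(x + a) / x → 1`, the claim
for `a` and for `a + 1` are equivalent, so it holds for every real `a`.
-/

open Real Filter Topology Asymptotics

noncomputable def gammaRatio (a x : ℝ) : ℝ := Gamma (x + a) / Gamma x / x ^ a

lemma tendsto_add_const_div_self (c : ℝ) :
    Tendsto (fun x : ℝ => (x + c) / x) atTop (𝓝 1) := by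
  have h : Tendsto (fun x : ℝ => 1 + c / x) atTop (𝓝 (1 + 0)) :=
    tendsto_const_nhds.add (tendsto_const_nhds.div_atTop tendsto_id)
  rw [add_zero] at h
  refine h.congr' ?_
  filter_upwards [eventually_ne_atTop 0] with x hx
  field_simp

lemma Real.Gamma_add_le_rpow_mul_Gamma {y b : ℝ} (hy : 0 < y) (hb₀ : 0 < b) (hb₁ : b < 1) :
    Gamma (y + b) ≤ y ^ b * Gamma y := by
  have hΓ : 0 < Gamma y := Gamma_pos_of_pos hy
  calc Gamma (y + b) = Gamma ((1 - b) * y + b * (y + 1)) := by ring_nf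
    _ ≤ Gamma y ^ (1 - b) * Gamma (y + 1) ^ b :=
      Gamma_mul_add_mul_le_rpow_Gamma_mul_rpow_Gamma hy (by linarith) (by linarith) hb₀
        (by ring)
    _ = y ^ b * Gamma y := by
      rw [Gamma_add_one hy.ne', mul_rpow hy.le hΓ.le, mul_left_comm, ← rpow_add hΓ,
        sub_add_cancel, rpow_one, mul_comm]

section gammaRatio

variable {a x : ℝ}

lemma gammaRatio_le_one (hx : 0 < x) (ha₀ : 0 < a) (ha₁ : a < 1) : gammaRatio a x ≤ 1 := by
  rw [gammaRatio, div_div, div_le_one (mul_pos (Gamma_pos_of_pos hx) (rpow_pos_of_pos hx a)),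
    mul_comm]
  exact Gamma_add_le_rpow_mul_Gamma hx ha₀ ha₁

lemma add_div_self_rpow_le_gammaRatio (hx : 0 < x) (ha₀ : 0 < a) (ha₁ : a < 1) :
    ((x + a) / x) ^ (a - 1) ≤ gammaRatio a x := by
  have hxa : 0 < x + a := by linarith
  have h := Gamma_add_le_rpow_mul_Gamma hxa (by linarith) (by linarith : 1 - a < 1)
  rw [add_add_sub_cancel, Gamma_add_one hx.ne'] at h
  have hΓ := Gamma_pos_of_pos hx
  rw [div_rpow hxa.le hx.le, ← neg_sub, rpow_neg hxa.le, rpow_neg hx.le, inv_div_inv,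
    rpow_sub hx, rpow_one, gammaRatio, div_right_comm,
    div_le_div_iff_of_pos_right (by positivity), div_le_div_iff₀ (by positivity) hΓ,
    mul_comm (Gamma (x + a))]
  exact h

lemma gammaRatio_add_one (hx : 0 < x) (hxa : 0 < x + a) :
    gammaRatio (a + 1) x = gammaRatio a x * ((x + a) / x) := by
  rw [gammaRatio, gammaRatio, ← add_assoc, Gamma_add_one hxa.ne', rpow_add_one hx.ne']
  have := Gamma_pos_of_pos hx
  field_simp

lemma tendsto_gammaRatio_add_one_iff :
    Tendsto (gammaRatio (a + 1)) atTop (𝓝 1) ↔ Tendsto (gammaRatio a) atTop (𝓝 1) := by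
  have hrel : gammaRatio (a + 1) =ᶠ[atTop] fun x => gammaRatio a x * ((x + a) / x) := by
    filter_upwards [eventually_gt_atTop 0, eventually_gt_atTop (-a)] with x hx hxa
    exact gammaRatio_add_one hx (by linarith)
  have hfactor : (fun x => (x + a) / x) ~[atTop] 1 :=
    (isEquivalent_const_iff_tendsto one_ne_zero).2 (tendsto_add_const_div_self a)
  rw [← mul_one (gammaRatio a)]
  exact (hrel.trans_isEquivalent (IsEquivalent.refl.mul hfactor)).tendsto_nhds_iff

lemma tendsto_gammaRatio_add_int_iff (n : ℤ) :
    Tendsto (gammaRatio (a + n)) atTop (𝓝 1) ↔ Tendsto (gammaRatio a) atTop (𝓝 1) := by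
  induction n using Int.induction_on with
  | zero => simp
  | succ n ih =>
    rw [← ih, ← tendsto_gammaRatio_add_one_iff (a := a + (n : ℤ))]
    congr! 2
    push_cast
    ring
  | pred n ih =>
    rw [← ih, ← tendsto_gammaRatio_add_one_iff (a := a + (-n - 1 : ℤ))]
    congr! 2
    push_cast
    ring

lemma tendsto_gammaRatio_zero : Tendsto (gammaRatio 0) atTop (𝓝 1) := by
  refine tendsto_const_nhds.congr' ?_
  filter_upwards [eventually_gt_atTop 0] with x hx
  simp [gammaRatio, (Gamma_pos_of_pos hx).ne']

lemma tendsto_gammaRatio_of_pos_of_lt_one (ha₀ : 0 < a) (ha₁ : a < 1) :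
    Tendsto (gammaRatio a) atTop (𝓝 1) := by
  have hlow : Tendsto (fun x => ((x + a) / x) ^ (a - 1)) atTop (𝓝 1) := by
    simpa using (tendsto_add_const_div_self a).rpow_const (p := a - 1) (Or.inl one_ne_zero)
  refine tendsto_of_tendsto_of_tendsto_of_le_of_le' hlow tendsto_const_nhds ?_ ?_ <;>
    filter_upwards [eventually_gt_atTop 0] with x hx
  exacts [add_div_self_rpow_le_gammaRatio hx ha₀ ha₁, gammaRatio_le_one hx ha₀ ha₁]

end gammaRatio

/-- For any fixed `a ∈ ℝ`, `Γ(x+a)/Γ(x)` is asymptotically equivalent to `x^a` as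
`x → ∞`, i.e. `(Γ(x+a)/Γ(x))/x^a → 1`. -/
theorem gamma_ratio_asymp (a : ℝ) :
    Tendsto (fun x : ℝ => Real.Gamma (x + a) / Real.Gamma x / x ^ a) atTop (nhds 1) := by
  change Tendsto (gammaRatio a) atTop (𝓝 1)
  rw [← Int.fract_add_floor a, tendsto_gammaRatio_add_int_iff]
  rcases (Int.fract_nonneg a).eq_or_lt with h | h
  · rw [← h]
    exact tendsto_gammaRatio_zero
  · exact tendsto_gammaRatio_of_pos_of_lt_one h (Int.fract_lt_one a)
end

section
/- For the NBNB model, the conditional probability of a partition C_N given N satisfies P(C_N | N, a, q, r, p) ∝ Γ(|C_N| + a) β^{|C_N|} ∏_{c ∈ C_N} Γ(|c| + r)/Γ(r), where β = q(1-p)^r / (1 - (1-p)^r). -/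
/-!
Since `k! · NegBin(a,q)_k = Γ(k+a)/Γ(a) · (1-q)^a/(1-(1-q)^a) · q^k` for `k ≥ 1`, the KP weight of a
partition with `K` blocks factors as `Γ(K+a) · q^K · ∏_c Γ(|c|+r)/Γ(r) · ((1-p)^r/(1-(1-p)^r))^K`
times `p^{∑|c|} = p^N` and constants depending only on `N`. Normalizing over all partitions of `[N]`
cancels the constant, leaving `Γ(K+a) β^K ∏_c Γ(|c|+r)/Γ(r)`.
-/

open Real Finset
open scoped Classical

/-- Truncated (to the positive integers) negative binomial pmf with parameters `a, q`. -/
noncomputable def truncNegBin (a q : ℝ) (k : ℕ) : ℝ :=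
  if k = 0 then 0 else
    Real.Gamma (k + a) * q ^ k * (1 - q) ^ a /
      ((1 - (1 - q) ^ a) * Real.Gamma a * Nat.factorial k)

/-- The KP-model probability of a partition: `P(C) = (|C|! κ_{|C|}/N!) ∏_{c} |c|! μ_{|c|}`. -/
noncomputable def kpWeight {N : ℕ} (κ μ : ℕ → ℝ)
    (C : Finpartition (Finset.univ : Finset (Fin N))) : ℝ :=
  (Nat.factorial C.parts.card : ℝ) * κ C.parts.card / Nat.factorial N *
    ∏ c ∈ C.parts, (Nat.factorial c.card : ℝ) * μ c.card

lemma div_sum_eq_div_sum_of_eq_mul {ι K : Type*} [Fintype ι] [Semifield K] {w f : ι → K} {c : K}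
    (hc : c ≠ 0) (h : ∀ i, w i = c * f i) (i : ι) : w i / ∑ j, w j = f i / ∑ j, f j := by
  simp only [h, ← Finset.mul_sum, mul_div_mul_left _ _ hc]

namespace Finpartition

variable {α : Type*} [DecidableEq α] {s : Finset α} (P : Finpartition s)

lemma card_ne_zero_of_mem_parts {c : Finset α} (hc : c ∈ P.parts) : c.card ≠ 0 :=
  (P.nonempty_of_mem_parts hc).card_ne_zero

lemma card_parts_ne_zero (hs : s.Nonempty) : P.parts.card ≠ 0 :=
  (P.parts_nonempty hs.ne_empty).card_ne_zero

lemma prod_pow_card_parts {M : Type*} [CommMonoid M] (x : M) :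
    ∏ c ∈ P.parts, x ^ c.card = x ^ s.card := by
  rw [Finset.prod_pow_eq_pow_sum, P.sum_card_parts]

end Finpartition

lemma factorial_mul_truncNegBin (a q : ℝ) {k : ℕ} (hk : k ≠ 0) :
    (k.factorial : ℝ) * truncNegBin a q k
      = Gamma (k + a) / Gamma a * ((1 - q) ^ a / (1 - (1 - q) ^ a)) * q ^ k := by
  have hfac : (k.factorial : ℝ) ≠ 0 := by positivity
  rw [truncNegBin, if_neg hk]
  field_simp

lemma one_sub_rpow_one_sub_pos {x a : ℝ} (hx0 : 0 < x) (hx1 : x ≤ 1) (ha : 0 < a) :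
    0 < 1 - (1 - x) ^ a := by
  have : (1 - x) ^ a < 1 := Real.rpow_lt_one (by linarith) (by linarith) ha
  linarith

noncomputable def nbnbWeight {N : ℕ} (a r β : ℝ)
    (C : Finpartition (Finset.univ : Finset (Fin N))) : ℝ :=
  Gamma (C.parts.card + a) * β ^ C.parts.card * ∏ c ∈ C.parts, Gamma (c.card + r) / Gamma r

lemma nbnbWeight_pos {N : ℕ} {a r β : ℝ} (ha : 0 < a) (hr : 0 < r) (hβ : 0 < β)
    (C : Finpartition (Finset.univ : Finset (Fin N))) : 0 < nbnbWeight a r β C := by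
  have hΓr := Gamma_pos_of_pos hr
  have hblocks : 0 < ∏ c ∈ C.parts, Gamma (c.card + r) / Gamma r :=
    Finset.prod_pos fun c _ => div_pos (Gamma_pos_of_pos (by positivity)) hΓr
  exact mul_pos (mul_pos (Gamma_pos_of_pos (by positivity)) (pow_pos hβ _)) hblocks

lemma kpWeight_truncNegBin {N : ℕ} (hN : 0 < N) (a q r p : ℝ)
    (C : Finpartition (Finset.univ : Finset (Fin N))) :
    kpWeight (truncNegBin a q) (truncNegBin r p) C
      = (1 - q) ^ a / (1 - (1 - q) ^ a) / Gamma a * p ^ N / N.factorial *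
        nbnbWeight a r (q * (1 - p) ^ r / (1 - (1 - p) ^ r)) C := by
  have hK := C.card_parts_ne_zero ⟨⟨0, hN⟩, Finset.mem_univ _⟩
  have hblocks : ∏ c ∈ C.parts, (c.card.factorial : ℝ) * truncNegBin r p c.card
      = (∏ c ∈ C.parts, Gamma (c.card + r) / Gamma r) *
          ((1 - p) ^ r / (1 - (1 - p) ^ r)) ^ C.parts.card * p ^ N := by
    rw [Finset.prod_congr rfl fun c hc =>
        factorial_mul_truncNegBin r p (C.card_ne_zero_of_mem_parts hc),
      Finset.prod_mul_distrib, Finset.prod_mul_distrib, Finset.prod_const,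
      C.prod_pow_card_parts, Finset.card_univ, Fintype.card_fin]
  rw [kpWeight, hblocks, factorial_mul_truncNegBin a q hK, nbnbWeight]
  ring

/-- For the NBNB model (a KP model with `κ = NegBin(a,q)` and `μ = NegBin(r,p)` truncated
to the positive integers), the conditional probability of a partition `C_N` given `N`
satisfies `P(C_N | N, a, q, r, p) ∝ Γ(|C_N| + a) β^{|C_N|} ∏_{c ∈ C_N} Γ(|c| + r)/Γ(r)`,
where `β = q(1-p)^r / (1 - (1-p)^r)`. -/
theorem nbnb_conditional_propto (N : ℕ) (hN : 0 < N) (a q r p : ℝ)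
    (ha : 0 < a) (hq0 : 0 < q) (hq1 : q < 1) (hr : 0 < r) (hp0 : 0 < p) (hp1 : p < 1) :
    ∃ Z : ℝ, 0 < Z ∧
      ∀ C : Finpartition (Finset.univ : Finset (Fin N)),
        kpWeight (truncNegBin a q) (truncNegBin r p) C /
            (∑' C' : Finpartition (Finset.univ : Finset (Fin N)),
              kpWeight (truncNegBin a q) (truncNegBin r p) C')
          = (Real.Gamma (C.parts.card + a) *
                (q * (1 - p) ^ r / (1 - (1 - p) ^ r)) ^ C.parts.card *
                ∏ c ∈ C.parts, Real.Gamma (c.card + r) / Real.Gamma r) / Z := by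
  set β := q * (1 - p) ^ r / (1 - (1 - p) ^ r)
  have hβ : 0 < β := by
    have := one_sub_rpow_one_sub_pos hp0 hp1.le hr
    have := rpow_pos_of_pos (sub_pos.mpr hp1) r
    positivity
  have hconst : (1 - q) ^ a / (1 - (1 - q) ^ a) / Gamma a * p ^ N / N.factorial ≠ 0 := by
    have := one_sub_rpow_one_sub_pos hq0 hq1.le ha
    have := rpow_pos_of_pos (sub_pos.mpr hq1) a
    have := Gamma_pos_of_pos ha
    positivity
  have hZ : 0 < ∑ C : Finpartition (univ : Finset (Fin N)), nbnbWeight a r β C :=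
    Finset.sum_pos (fun C _ => nbnbWeight_pos ha hr hβ C) Finset.univ_nonempty
  refine ⟨_, hZ, fun C => ?_⟩
  rw [tsum_fintype]
  exact div_sum_eq_div_sum_of_eq_mul hconst (kpWeight_truncNegBin hN a q r p) C
end

section
/- For a KP model, the conditional probability of reassigning element n, given the rest of the partition C_N \ n and N, is proportional to (|c|+1) μ_{|c|+1}/μ_{|c|} for joining an existing cluster c, and proportional to (|C_N \ n| + 1) (κ_{|C_N \ n|+1}/κ_{|C_N \ n|}) μ_1 for forming a new singleton cluster. -/
/-
The weight of a partition factorises over its blocks, so adding `n` to a block `c` only changes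
the factor `|c|! μ_{|c|}` into `(|c|+1)! μ_{|c|+1}`, keeping the number of blocks; opening a new
block `{n}` multiplies the block product by `1! μ_1` and changes `|P|! κ_{|P|}` into
`(|P|+1)! κ_{|P|+1}`. Both reseating weights are therefore the weight `t` of the partition
`C_N \ n` times the stated ratios.
-/

open Finset

/-- Unnormalized KP-model probability of a partition with block set `P`:
`|P|! κ_{|P|} ∏_{c ∈ P} |c|! μ_{|c|}` (the `N`-dependent constant is dropped since
we only consider proportionality at fixed `N`). -/
noncomputable def kpW {α : Type*} [DecidableEq α] (κ μ : ℕ → ℝ)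
    (P : Finset (Finset α)) : ℝ :=
  (Nat.factorial P.card : ℝ) * κ P.card * ∏ c ∈ P, (Nat.factorial c.card : ℝ) * μ c.card

section

variable {α : Type*} [DecidableEq α] (κ μ : ℕ → ℝ)

theorem kpW_pos {P : Finset (Finset α)} (hκ : 0 < κ P.card) (hμ : ∀ c ∈ P, 0 < μ c.card) :
    0 < kpW κ μ P :=
  mul_pos (mul_pos (by positivity) hκ)
    (prod_pos fun c hc => mul_pos (by positivity) (hμ c hc))

theorem kpW_insert_insert_erase {P : Finset (Finset α)} {c : Finset α} {n : α} (hc : c ∈ P)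
    (hnc : n ∉ c) (hins : insert n c ∉ P.erase c) (hμc : μ c.card ≠ 0) :
    kpW κ μ (insert (insert n c) (P.erase c))
      = kpW κ μ P * ((c.card + 1 : ℝ) * μ (c.card + 1) / μ c.card) := by
  have hcard : (insert (insert n c) (P.erase c)).card = P.card := by
    rw [card_insert_of_notMem hins, card_erase_add_one hc]
  rw [kpW, kpW, hcard, prod_insert hins, card_insert_of_notMem hnc, ← mul_prod_erase P _ hc,
    Nat.factorial_succ]
  field_simp
  push_cast
  ring

theorem kpW_insert_singleton {P : Finset (Finset α)} {n : α} (hn : {n} ∉ P)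
    (hκ : κ P.card ≠ 0) :
    kpW κ μ (insert {n} P)
      = kpW κ μ P * ((P.card + 1 : ℝ) * (κ (P.card + 1) / κ P.card) * μ 1) := by
  rw [kpW, kpW, card_insert_of_notMem hn, prod_insert hn, card_singleton, Nat.factorial_succ,
    Nat.factorial_one]
  field_simp
  push_cast
  ring

end

/-- For a KP model (with `P(C_N | N) ∝ |C_N|! κ_{|C_N|} ∏_{c} |c|! μ_{|c|}`), the
conditional probability of reassigning element `n`, given the rest of the partition
`C_N \ n` (here `D`, a partition of `s` with `n ∉ s`) is proportional to
`(|c|+1) μ_{|c|+1}/μ_{|c|}` for joining an existing cluster `c ∈ D`, and proportional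
to `(|D| + 1)(κ_{|D|+1}/κ_{|D|}) μ₁` for forming a new singleton cluster. -/
theorem kp_reseating_weights {α : Type*} [DecidableEq α] (κ μ : ℕ → ℝ)
    (hμ : ∀ m, 1 ≤ m → 0 < μ m) (s : Finset α) (n : α) (hn : n ∉ s)
    (D : Finpartition s) (hκD : 0 < κ D.parts.card) :
    ∃ t : ℝ, 0 < t ∧
      (∀ c ∈ D.parts,
        kpW κ μ (insert (insert n c) (D.parts.erase c))
          = t * ((c.card + 1 : ℝ) * μ (c.card + 1) / μ c.card)) ∧
      kpW κ μ (insert {n} D.parts)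
        = t * ((D.parts.card + 1 : ℝ) * (κ (D.parts.card + 1) / κ D.parts.card) * μ 1) := by
  have hμD : ∀ c ∈ D.parts, 0 < μ c.card := fun c hc =>
    hμ _ (card_pos.mpr (D.nonempty_of_mem_parts hc))
  have hnD : ∀ c ∈ D.parts, n ∉ c := fun c hc h => hn (D.le hc h)
  refine ⟨kpW κ μ D.parts, kpW_pos κ μ hκD hμD, fun c hc => ?_, ?_⟩
  · have hins : insert n c ∉ D.parts.erase c := fun h =>
      hnD _ (mem_of_mem_erase h) (mem_insert_self n c)
    exact kpW_insert_insert_erase κ μ hc (hnD c hc) hins (hμD c hc).ne'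
  · exact kpW_insert_singleton κ μ (fun h => hnD _ h (mem_singleton_self n)) hκD.ne'
end

section
/- Let (C_N : N = 1, 2, ...) be the sequence of random partitions induced by an exchangeable random partition of ℕ. Then either the partition is the trivial partition into singletons almost surely on the non-dust part, or for each block with positive asymptotic frequency π_l > 0, the largest block size M_N satisfies liminf_{N→∞} M_N/N ≥ π_l almost surely; consequently, any infinitely exchangeable clustering model whose partitions are not all-singletons with probability one fails the microclustering property. -/
/-! By the strong law of large numbers, the empirical frequency of a label `l` among
`z 0 ω, …, z (N-1) ω` tends almost surely to `π l`; the block carrying label `l` is no larger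
than the largest block, so `liminf M_N / N ≥ π l`. If `π l > 0`, then almost surely
`M_N / N > π l / 2` eventually, so by dominated convergence `μ (M_N / N ≥ π l / 2) → 1`. -/

open MeasureTheory ProbabilityTheory Filter Finset

/-- The size `M_N` of the largest block of the partition of `{0,…,N-1}` induced by
the label sequence `z` (fibers of `z · ω` restricted to `range N`). -/
def maxBlockSize (z : ℕ → Ω → ℕ) (ω : Ω) (N : ℕ) : ℕ :=
  (Finset.range N).sup fun n =>
    ((Finset.range N).filter (fun m => z m ω = z n ω)).card

theorem Finset.measurable_sup {α δ ι : Type*} [MeasurableSpace α] [SemilatticeSup α] [OrderBot α]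
    [MeasurableSup₂ α] [MeasurableSpace δ] {s : Finset ι} {f : ι → δ → α}
    (hf : ∀ i ∈ s, Measurable (f i)) : Measurable fun x => s.sup (f · x) := by
  simp_rw [← Finset.sup_apply]
  exact Finset.sup_induction measurable_const (fun _ hg _ hh => hg.sup hh) hf

theorem tendsto_measureReal_of_ae_eventually_mem {α ι : Type*} [MeasurableSpace α]
    {μ : Measure α} [IsFiniteMeasure μ] {L : Filter ι} [L.IsCountablyGenerated] {A : ι → Set α}
    (hA : ∀ i, MeasurableSet (A i)) (h : ∀ᵐ x ∂μ, ∀ᶠ i in L, x ∈ A i) :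
    Tendsto (fun i => μ.real (A i)) L (nhds (μ.real Set.univ)) :=
  (ENNReal.tendsto_toReal (measure_ne_top μ _)).comp <|
    tendsto_measure_of_ae_tendsto_indicator_of_isFiniteMeasure L MeasurableSet.univ hA <|
      h.mono fun _ hx => hx.mono fun _ hi => by simp [hi]

theorem ae_tendsto_card_filter_mem_div {Ω α : Type*} [MeasurableSpace Ω] [MeasurableSpace α]
    {μ : Measure Ω} [IsFiniteMeasure μ] {z : ℕ → Ω → α} (hz : ∀ n, Measurable (z n))
    (hindep : Pairwise fun i j => IndepFun (z i) (z j) μ)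
    (hident : ∀ i, IdentDistrib (z i) (z 0) μ μ) {s : Set α} [DecidablePred (· ∈ s)]
    (hs : MeasurableSet s) :
    ∀ᵐ ω ∂μ, Tendsto (fun N : ℕ => (#{i ∈ range N | z i ω ∈ s} : ℝ) / N) atTop
      (nhds (μ.real (z 0 ⁻¹' s))) := by
  have hf : Measurable (s.indicator (1 : α → ℝ)) := measurable_one.indicator hs
  have hX : ∀ i, s.indicator (1 : α → ℝ) ∘ z i = (z i ⁻¹' s).indicator 1 := fun i =>
    funext fun _ => (Set.indicator_comp_right (z i)).symm
  have hslln := strong_law_ae_real (fun i => s.indicator 1 ∘ z i)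
    (by rw [hX]; exact (integrable_const 1).indicator (hz 0 hs))
    (fun i j hij => (hindep hij).comp hf hf) (fun i => (hident i).comp hf)
  simp only [hX, integral_indicator_one (hz 0 hs)] at hslln
  refine hslln.mono fun ω hω => hω.congr fun N => ?_
  rw [natCast_card_filter]
  congr 1
  refine sum_congr rfl fun i _ => ?_
  by_cases h : z i ω ∈ s <;> simp [h]

section maxBlockSize

variable {Ω : Type*} (z : ℕ → Ω → ℕ) (ω : Ω) (N : ℕ)

theorem card_filter_eq_le_maxBlockSize (l : ℕ) :
    #{m ∈ range N | z m ω = l} ≤ maxBlockSize z ω N := by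
  obtain hempty | ⟨n, hn⟩ := ({m ∈ range N | z m ω = l} : Finset ℕ).eq_empty_or_nonempty
  · simp [hempty]
  · obtain ⟨hnN, rfl⟩ := mem_filter.1 hn
    exact le_sup (f := fun n => #{m ∈ range N | z m ω = z n ω}) hnN

theorem maxBlockSize_le : maxBlockSize z ω N ≤ N :=
  Finset.sup_le fun _ _ => (card_filter_le _ _).trans_eq (card_range N)

theorem card_filter_eq_div_le_maxBlockSize_div (l : ℕ) :
    (#{m ∈ range N | z m ω = l} : ℝ) / N ≤ maxBlockSize z ω N / N := by
  gcongr
  exact card_filter_eq_le_maxBlockSize z ω N l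

theorem maxBlockSize_div_le_one : (maxBlockSize z ω N : ℝ) / N ≤ 1 :=
  div_le_one_of_le₀ (mod_cast maxBlockSize_le z ω N) N.cast_nonneg

variable {z ω} {l : ℕ} {p : ℝ}
    (h : Tendsto (fun N : ℕ => (#{m ∈ range N | z m ω = l} : ℝ) / N) atTop (nhds p))
include h

theorem le_liminf_maxBlockSize_div :
    p ≤ atTop.liminf fun N : ℕ => (maxBlockSize z ω N : ℝ) / N := by
  rw [← h.liminf_eq]
  exact liminf_le_liminf (.of_forall (card_filter_eq_div_le_maxBlockSize_div z ω · l))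
    h.isBoundedUnder_ge
    (isBoundedUnder_of ⟨1, maxBlockSize_div_le_one z ω⟩).isCoboundedUnder_ge

theorem eventually_lt_maxBlockSize_div {ε : ℝ} (hε : ε < p) :
    ∀ᶠ N in atTop, ε < (maxBlockSize z ω N : ℝ) / N :=
  (h.eventually (lt_mem_nhds hε)).mono fun N hN =>
    hN.trans_le (card_filter_eq_div_le_maxBlockSize_div z ω N l)

end maxBlockSize

theorem measurable_maxBlockSize {Ω : Type*} [MeasurableSpace Ω] {z : ℕ → Ω → ℕ}
    (hz : ∀ n, Measurable (z n)) (N : ℕ) : Measurable fun ω => maxBlockSize z ω N := by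
  refine Finset.measurable_sup fun n _ => ?_
  simp_rw [card_filter]
  exact Finset.measurable_sum _ fun m _ =>
    Measurable.ite (measurableSet_eq_fun (hz m) (hz n)) measurable_const measurable_const

theorem exchangeable_partition_fails_microclustering_general
    {Ω : Type*} [MeasurableSpace Ω] (μ : Measure Ω) [IsProbabilityMeasure μ]
    (z : ℕ → Ω → ℕ) (hmeas : ∀ n, Measurable (z n))
    (hindep : ProbabilityTheory.iIndepFun z μ)
    (hident : ∀ n, MeasureTheory.Measure.map (z n) μ = MeasureTheory.Measure.map (z 0) μ)
    (π : ℕ → ℝ)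
    (hlaw : ∀ l, (μ {ω | z 0 ω = l}).toReal = π l) :
    ((∀ l, π l = 0) ∨
      (∀ l, 0 < π l → ∀ᵐ ω ∂μ,
        π l ≤ Filter.atTop.liminf (fun N : ℕ => (maxBlockSize z ω N : ℝ) / N))) ∧
    ((∃ l, 0 < π l) →
      ∃ ε > (0 : ℝ), ¬ Tendsto
        (fun N : ℕ => (μ {ω | ε ≤ (maxBlockSize z ω N : ℝ) / N}).toReal)
        atTop (nhds 0)) := by
  have hfreq : ∀ l, ∀ᵐ ω ∂μ,
      Tendsto (fun N : ℕ => (#{m ∈ range N | z m ω = l} : ℝ) / N) atTop (nhds (π l)) := by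
    intro l
    have hpl : μ.real (z 0 ⁻¹' {l}) = π l := hlaw l
    simpa only [Set.mem_singleton_iff, hpl] using
      ae_tendsto_card_filter_mem_div hmeas (fun i j hij => hindep.indepFun hij)
      (fun i => ⟨(hmeas i).aemeasurable, (hmeas 0).aemeasurable, hident i⟩)
      (measurableSet_singleton l)
  refine ⟨.inr fun l _ => (hfreq l).mono fun _ => le_liminf_maxBlockSize_div, ?_⟩
  rintro ⟨l, hl⟩
  refine ⟨π l / 2, half_pos hl, fun hzero => ?_⟩
  have hone := tendsto_measureReal_of_ae_eventually_mem
    (A := fun N => {ω | π l / 2 ≤ (maxBlockSize z ω N : ℝ) / N})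
    (fun N => measurableSet_le measurable_const
      ((measurable_from_top.comp (measurable_maxBlockSize hmeas N)).div_const _))
    ((hfreq l).mono fun _ hω =>
      (eventually_lt_maxBlockSize_div hω (half_lt_self hl)).mono fun _ h => h.le)
  rw [probReal_univ] at hone
  exact one_ne_zero (tendsto_nhds_unique hone hzero)

/-- Kingman paintbox consequence: let `(C_N)` be the partition sequence induced by an
exchangeable random partition of `ℕ`, given via its paintbox representation by labels
`z₁, z₂, …` drawn i.i.d. from a probability vector `π` (the non-dust part).  Then
either the partition restricted to the non-dust part is trivially all singletons
(all `π_l = 0`), or for each block with positive asymptotic frequency `π_l > 0` the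
largest block size `M_N` satisfies `liminf M_N/N ≥ π_l` almost surely; consequently,
if the partitions are not all-singletons with probability one (some `π_l > 0`), the
model fails the microclustering property (`M_N/N → 0` in probability fails). -/
theorem exchangeable_partition_fails_microclustering
    {Ω : Type*} [MeasurableSpace Ω] (μ : Measure Ω) [IsProbabilityMeasure μ]
    (z : ℕ → Ω → ℕ) (hmeas : ∀ n, Measurable (z n))
    (hindep : ProbabilityTheory.iIndepFun z μ)
    (hident : ∀ n, MeasureTheory.Measure.map (z n) μ = MeasureTheory.Measure.map (z 0) μ)
    (π : ℕ → ℝ) (hπ0 : ∀ l, 0 ≤ π l) (hπ1 : ∑' l, π l ≤ 1)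
    (hlaw : ∀ l, (μ {ω | z 0 ω = l}).toReal = π l) :
    ((∀ l, π l = 0) ∨
      (∀ l, 0 < π l → ∀ᵐ ω ∂μ,
        π l ≤ Filter.atTop.liminf (fun N : ℕ => (maxBlockSize z ω N : ℝ) / N))) ∧
    ((∃ l, 0 < π l) →
      ∃ ε > (0 : ℝ), ¬ Tendsto
        (fun N : ℕ => (μ {ω | ε ≤ (maxBlockSize z ω N : ℝ) / N}).toReal)
        atTop (nhds 0)) :=
  exchangeable_partition_fails_microclustering_general μ z hmeas hindep hident π hlaw
end
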